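/- Let L(x,θ,v) be C² on ℝ×[s,T]×ℝ, strictly concave in v, with −c₀+c₂v² ≤ −L(x,θ,v) ≤ c₀+c₁v² for positive constants c₀,c₁,c₂. Fix s < t ≤ T, x ∈ ℝ and y₁ < y₂. For i = 1,2 let ξⁱ ∈ C²([s,t]) maximize the action ξ ↦ ∫_s^t L(ξ(θ),θ,ξ̇(θ))dθ over all absolutely continuous paths with square-integrable derivative satisfying ξ(s) = yᵢ and ξ(t) = x; assume every such maximizer is C² and satisfies the Euler–Lagrange equation d/dθ[L_v(ξ(θ),θ,ξ̇(θ))] = L_x(ξ(θ),θ,ξ̇(θ)), whose solutions are uniquely determined by (ξ(θ₀), ξ̇(θ₀)). Then ξ¹(θ) < ξ²(θ) for every θ ∈ [s,t), ξ̇¹(t) > ξ̇²(t), and consequently L_v(x,t,ξ̇¹(t)) < L_v(x,t,ξ̇²(t)); in particular the fundamental-solution gradient M(x,t;y,s) := L_v(x,t,ξ̇(t)) is strictly increasing in the starting point y. -/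

import Mathlib

open MeasureTheory Set

/-- The action `∫_s^t L(ξ(θ),θ,ξ'(θ)) dθ` of a path `ξ` with velocity `ξ'`. -/
noncomputable def pathAction (L : ℝ → ℝ → ℝ → ℝ) (s t : ℝ) (ξ ξ' : ℝ → ℝ) : ℝ :=
  ∫ θ in s..t, L (ξ θ) θ (ξ' θ)

/-- An admissible path from `(y,s)` to `(x,t)`: absolutely continuous with
square-integrable derivative `ξ'`, i.e. `ξ(θ) = y + ∫_s^θ ξ'` on `[s,t]`. -/
def AdmissiblePath (s t y x : ℝ) (ξ ξ' : ℝ → ℝ) : Prop :=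
  ξ s = y ∧ ξ t = x ∧
  (∀ θ ∈ Icc s t, ξ θ = y + ∫ u in s..θ, ξ' u) ∧
  IntegrableOn ξ' (Icc s t) ∧
  IntegrableOn (fun u => (ξ' u) ^ 2) (Icc s t)

/-- `ξ` is twice continuously differentiable on `[s,t]`. -/
def C2On (s t : ℝ) (ξ : ℝ → ℝ) : Prop :=
  (∀ θ ∈ Icc s t, HasDerivAt ξ (deriv ξ θ) θ) ∧
  (∀ θ ∈ Icc s t, HasDerivAt (deriv ξ) (deriv (deriv ξ) θ) θ) ∧
  ContinuousOn (deriv (deriv ξ)) (Icc s t)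

/-- The Euler--Lagrange equation
`d/dθ [L_v(ξ(θ),θ,ξ̇(θ))] = L_x(ξ(θ),θ,ξ̇(θ))` on `[s,t]`. -/
def SatisfiesEL (L : ℝ → ℝ → ℝ → ℝ) (s t : ℝ) (ξ : ℝ → ℝ) : Prop :=
  ∀ θ ∈ Icc s t,
    HasDerivAt (fun u => deriv (fun w => L (ξ u) u w) (deriv ξ u))
      (deriv (fun a => L a θ (deriv ξ θ)) (ξ θ)) θ

/-- `ξ` (with velocity `ξ'`) maximizes the action among admissible paths from
`(y,s)` to `(x,t)`. -/
def IsMaximizer (L : ℝ → ℝ → ℝ → ℝ) (s t y x : ℝ) (ξ ξ' : ℝ → ℝ) : Prop :=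
  AdmissiblePath s t y x ξ ξ' ∧
  ∀ η η' : ℝ → ℝ, AdmissiblePath s t y x η η' →
    pathAction L s t η η' ≤ pathAction L s t ξ ξ'

/-!
If the two maximizers met at some `θ₀ ∈ (s,t)`, exchanging their tails at `θ₀` would give
admissible competitors, and comparing actions shows that following `ξ²` up to `θ₀` and `ξ¹`
afterwards is again a maximizer from `y₂`. Maximizers are `C²`, so this broken path has no corner:
the two paths have the same position and velocity at `θ₀`, and uniqueness for the Euler–Lagrange
equation forces `ξ¹ = ξ²`, contradicting `y₁ < y₂`. Hence the paths do not meet before `t`, and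
`ξ¹ < ξ²` on `[s,t)` by continuity. They do meet at `t`, so `ξ̇¹(t) ≥ ξ̇²(t)`, with equality again
excluded by uniqueness; strict concavity makes `L_v(x,t,·)` strictly decreasing.
-/

open Filter Topology

noncomputable def concatPath (θ₀ : ℝ) (f g : ℝ → ℝ) : ℝ → ℝ :=
  fun θ => if θ ≤ θ₀ then f θ else g θ

section concatPath

variable {θ₀ a b : ℝ} {f g : ℝ → ℝ}

lemma concatPath_self : concatPath θ₀ f f = f := funext fun _ => ite_self _

lemma MeasureTheory.IntegrableOn.intervalIntegrable_of_mem_Icc {c d : ℝ}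
    (hf : IntegrableOn f (Icc a b)) (hc : c ∈ Icc a b) (hd : d ∈ Icc a b) :
    IntervalIntegrable f volume c d :=
  (hf.mono_set (uIcc_subset_Icc hc hd)).intervalIntegrable

lemma integrableOn_concatPath (hθ₀ : θ₀ ∈ Icc a b) (hf : IntegrableOn f (Icc a b))
    (hg : IntegrableOn g (Icc a b)) : IntegrableOn (concatPath θ₀ f g) (Icc a b) := by
  rw [← Icc_union_Icc_eq_Icc hθ₀.1 hθ₀.2]
  refine IntegrableOn.union ?_ ?_
  · exact (hf.mono_set (Icc_subset_Icc le_rfl hθ₀.2)).congr_fun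
      (fun θ hθ => (if_pos hθ.2).symm) measurableSet_Icc
  · rw [integrableOn_Icc_iff_integrableOn_Ioc]
    exact (hg.mono_set (Ioc_subset_Icc_self.trans (Icc_subset_Icc hθ₀.1 le_rfl))).congr_fun
      (fun θ hθ => (if_neg (not_le.2 hθ.1)).symm) measurableSet_Ioc

lemma integral_concatPath (hθ₀ : θ₀ ∈ Icc a b) (hf : IntegrableOn f (Icc a b))
    (hg : IntegrableOn g (Icc a b)) :
    ∫ u in a..b, concatPath θ₀ f g u = (∫ u in a..θ₀, f u) + ∫ u in θ₀..b, g u := by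
  have hfg := integrableOn_concatPath hθ₀ hf hg
  have ha : a ∈ Icc a b := ⟨le_rfl, hθ₀.1.trans hθ₀.2⟩
  have hb : b ∈ Icc a b := ⟨hθ₀.1.trans hθ₀.2, le_rfl⟩
  rw [← intervalIntegral.integral_add_adjacent_intervals
    (hfg.intervalIntegrable_of_mem_Icc ha hθ₀) (hfg.intervalIntegrable_of_mem_Icc hθ₀ hb)]
  congr 1
  · refine intervalIntegral.integral_congr_ae (ae_of_all _ fun u hu => ?_)
    rw [uIoc_of_le hθ₀.1] at hu
    exact if_pos hu.2
  · refine intervalIntegral.integral_congr_ae (ae_of_all _ fun u hu => ?_)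
    rw [uIoc_of_le hθ₀.2] at hu
    exact if_neg (not_le.2 hu.1)

lemma HasDerivAt.eq_of_eqOn_Icc {f' g' p : ℝ} (hf : HasDerivAt f f' p) (hg : HasDerivAt g g' p)
    (hab : a < b) (hp : p ∈ Icc a b) (heq : EqOn f g (Icc a b)) : f' = g' :=
  (uniqueDiffOn_Icc hab p hp).eq_deriv _
    (hf.hasDerivWithinAt.congr (fun _ hy => (heq hy).symm) (heq hp).symm) hg.hasDerivWithinAt

lemma HasDerivAt.eq_of_eqOn_concatPath {h : ℝ → ℝ} {h' f' g' : ℝ} (hh : HasDerivAt h h' θ₀)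
    (hf : HasDerivAt f f' θ₀) (hg : HasDerivAt g g' θ₀) (hθ₀ : θ₀ ∈ Ioo a b)
    (hmeet : f θ₀ = g θ₀) (heq : EqOn h (concatPath θ₀ f g) (Icc a b)) : f' = g' := by
  have heq_f : EqOn h f (Icc a θ₀) := fun θ hθ => by
    rw [heq ⟨hθ.1, hθ.2.trans hθ₀.2.le⟩, concatPath, if_pos hθ.2]
  have heq_g : EqOn h g (Icc θ₀ b) := fun θ hθ => by
    rw [heq ⟨hθ₀.1.le.trans hθ.1, hθ.2⟩, concatPath]
    split_ifs with hle
    · rw [le_antisymm hle hθ.1, hmeet]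
    · rfl
  rw [← hh.eq_of_eqOn_Icc hf hθ₀.1 (right_mem_Icc.2 hθ₀.1.le) heq_f,
    hh.eq_of_eqOn_Icc hg hθ₀.2 (left_mem_Icc.2 hθ₀.2.le) heq_g]

end concatPath

section Maximizer

variable {L : ℝ → ℝ → ℝ → ℝ} {s t θ₀ ya yb x : ℝ} {ξ ξa ξa' ξb ξb' : ℝ → ℝ}

lemma AdmissiblePath.concat (ha : AdmissiblePath s t ya x ξa ξa')
    (hb : AdmissiblePath s t yb x ξb ξb') (hθ₀ : θ₀ ∈ Ico s t) (hmeet : ξa θ₀ = ξb θ₀) :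
    AdmissiblePath s t ya x (concatPath θ₀ ξa ξb) (concatPath θ₀ ξa' ξb') := by
  obtain ⟨has, -, harep, hai, hai2⟩ := ha
  obtain ⟨-, hbt, hbrep, hbi, hbi2⟩ := hb
  have hθ₀' : θ₀ ∈ Icc s t := Ico_subset_Icc_self hθ₀
  have hsq : (fun u => concatPath θ₀ ξa' ξb' u ^ 2)
      = concatPath θ₀ (fun u => ξa' u ^ 2) (fun u => ξb' u ^ 2) :=
    funext fun u => apply_ite (· ^ 2) (u ≤ θ₀) (ξa' u) (ξb' u)
  refine ⟨by simp [concatPath, hθ₀.1, has], by simp [concatPath, hθ₀.2, hbt], fun θ hθ => ?_,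
    integrableOn_concatPath hθ₀' hai hbi, hsq ▸ integrableOn_concatPath hθ₀' hai2 hbi2⟩
  rcases le_or_gt θ θ₀ with hle | hlt
  · rw [concatPath, if_pos hle, harep θ hθ]
    congr 1
    refine intervalIntegral.integral_congr fun u hu => ?_
    rw [uIcc_of_le hθ.1] at hu
    exact (if_pos (hu.2.trans hle)).symm
  · have hsub : Icc s θ ⊆ Icc s t := Icc_subset_Icc le_rfl hθ.2
    have hs : s ∈ Icc s t := ⟨le_rfl, hθ.1.trans hθ.2⟩
    rw [integral_concatPath ⟨hθ₀.1, hlt.le⟩ (hai.mono_set hsub) (hbi.mono_set hsub),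
      concatPath, if_neg hlt.not_ge]
    have htail := intervalIntegral.integral_interval_sub_left
      (hbi.intervalIntegrable_of_mem_Icc hs hθ) (hbi.intervalIntegrable_of_mem_Icc hs hθ₀')
    linarith [harep θ₀ hθ₀', hbrep θ₀ hθ₀', hbrep θ hθ]

lemma pathAction_concat (hθ₀ : θ₀ ∈ Icc s t)
    (hFa : IntegrableOn (fun θ => L (ξa θ) θ (ξa' θ)) (Icc s t))
    (hFb : IntegrableOn (fun θ => L (ξb θ) θ (ξb' θ)) (Icc s t)) :
    pathAction L s t (concatPath θ₀ ξa ξb) (concatPath θ₀ ξa' ξb')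
      = (∫ θ in s..θ₀, L (ξa θ) θ (ξa' θ)) + ∫ θ in θ₀..t, L (ξb θ) θ (ξb' θ) := by
  have hL : (fun θ => L (concatPath θ₀ ξa ξb θ) θ (concatPath θ₀ ξa' ξb' θ))
      = concatPath θ₀ (fun θ => L (ξa θ) θ (ξa' θ)) (fun θ => L (ξb θ) θ (ξb' θ)) :=
    funext fun θ => by unfold concatPath; split_ifs <;> rfl
  rw [pathAction, hL, integral_concatPath hθ₀ hFa hFb]

lemma pathAction_eq_add (hθ₀ : θ₀ ∈ Icc s t)
    (hF : IntegrableOn (fun θ => L (ξa θ) θ (ξa' θ)) (Icc s t)) :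
    pathAction L s t ξa ξa'
      = (∫ θ in s..θ₀, L (ξa θ) θ (ξa' θ)) + ∫ θ in θ₀..t, L (ξa θ) θ (ξa' θ) := by
  simpa only [concatPath_self] using pathAction_concat hθ₀ hF hF

lemma IsMaximizer.concat (ha : IsMaximizer L s t ya x ξa ξa') (hb : IsMaximizer L s t yb x ξb ξb')
    (hFa : IntegrableOn (fun θ => L (ξa θ) θ (ξa' θ)) (Icc s t))
    (hFb : IntegrableOn (fun θ => L (ξb θ) θ (ξb' θ)) (Icc s t))
    (hθ₀ : θ₀ ∈ Ico s t) (hmeet : ξa θ₀ = ξb θ₀) :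
    IsMaximizer L s t ya x (concatPath θ₀ ξa ξb) (concatPath θ₀ ξa' ξb') := by
  have hθ₀' : θ₀ ∈ Icc s t := Ico_subset_Icc_self hθ₀
  refine ⟨ha.1.concat hb.1 hθ₀ hmeet, fun η η' hη => (ha.2 η η' hη).trans ?_⟩
  -- maximality of `ξb` against the other exchange: the tail of `ξb` beats that of `ξa`
  have hb_tail := hb.2 _ _ (hb.1.concat ha.1 hθ₀ hmeet.symm)
  rw [pathAction_concat hθ₀' hFb hFa, pathAction_eq_add hθ₀' hFb] at hb_tail
  rw [pathAction_concat hθ₀' hFa hFb, pathAction_eq_add hθ₀' hFa]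
  linarith

lemma C2On.continuousOn (hξ : C2On s t ξ) : ContinuousOn ξ (Icc s t) :=
  fun θ hθ => (hξ.1 θ hθ).continuousAt.continuousWithinAt

lemma C2On.continuousOn_deriv (hξ : C2On s t ξ) : ContinuousOn (deriv ξ) (Icc s t) :=
  fun θ hθ => (hξ.2.1 θ hθ).continuousAt.continuousWithinAt

lemma C2On.integrableOn_lagrangian (hξ : C2On s t ξ)
    (hL : Continuous fun p : ℝ × ℝ × ℝ => L p.1 p.2.1 p.2.2) :
    IntegrableOn (fun θ => L (ξ θ) θ (deriv ξ θ)) (Icc s t) :=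
  (hL.comp_continuousOn
    (hξ.continuousOn.prodMk (continuousOn_id.prodMk hξ.continuousOn_deriv))).integrableOn_Icc

end Maximizer

lemma lt_on_Ico_of_ne_on_Ioo {f g : ℝ → ℝ} {a b : ℝ} (hf : ContinuousOn f (Icc a b))
    (hg : ContinuousOn g (Icc a b)) (ha : f a < g a) (hne : ∀ x ∈ Ioo a b, f x ≠ g x) :
    ∀ x ∈ Ico a b, f x < g x := by
  rintro x ⟨hax, hxb⟩
  rcases hax.eq_or_lt with rfl | hax
  · exact ha
  by_contra! hle
  have hsub : Icc a x ⊆ Icc a b := Icc_subset_Icc le_rfl hxb.le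
  obtain ⟨c, hc, hc0⟩ := intermediate_value_Ioc' hax.le ((hg.sub hf).mono hsub)
    (show (0 : ℝ) ∈ Ico ((g - f) x) ((g - f) a) by
      simp only [Pi.sub_apply]; exact ⟨by linarith, by linarith⟩)
  exact hne c ⟨hc.1, hc.2.trans_lt hxb⟩ (sub_eq_zero.1 hc0).symm

lemma HasDerivAt.le_of_lt_on_Ioo_of_eq {f g : ℝ → ℝ} {f' g' a b : ℝ} (hf : HasDerivAt f f' b)
    (hg : HasDerivAt g g' b) (hab : a < b) (hlt : ∀ x ∈ Ioo a b, f x < g x) (heq : f b = g b) :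
    g' ≤ f' := by
  have hslope : Tendsto (slope (g - f) b) (𝓝[<] b) (𝓝 (g' - f')) := by
    simpa using hasDerivWithinAt_iff_tendsto_slope.1 ((hg.sub hf).hasDerivWithinAt (s := Iio b))
  have hnonpos : ∀ᶠ u in 𝓝[<] b, slope (g - f) b u ≤ 0 := by
    filter_upwards [Ioo_mem_nhdsLT hab] with u hu
    rw [slope_def_field]
    exact div_nonpos_of_nonneg_of_nonpos (by simp [heq, (hlt u hu).le]) (by linarith [hu.2])
  exact sub_nonpos.1 (le_of_tendsto hslope hnonpos)

theorem stmt11_general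
    (L : ℝ → ℝ → ℝ → ℝ) (s t x y1 y2 : ℝ)
    (hst : s < t)
    (hL : ContDiff ℝ 2 (fun p : ℝ × ℝ × ℝ => L p.1 p.2.1 p.2.2))
    (hconc : ∀ a θ, StrictConcaveOn ℝ univ (fun w => L a θ w))
    (hy : y1 < y2)
    (ξ1 ξ2 : ℝ → ℝ)
    (hξ1C2 : C2On s t ξ1) (hξ2C2 : C2On s t ξ2)
    (hmax1 : IsMaximizer L s t y1 x ξ1 (deriv ξ1))
    (hmax2 : IsMaximizer L s t y2 x ξ2 (deriv ξ2))
    (hEL1 : SatisfiesEL L s t ξ1) (hEL2 : SatisfiesEL L s t ξ2)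
    (hreg : ∀ y' x' : ℝ, ∀ ξ ξ' : ℝ → ℝ, AdmissiblePath s t y' x' ξ ξ' →
      (∀ η η', AdmissiblePath s t y' x' η η' →
        pathAction L s t η η' ≤ pathAction L s t ξ ξ') →
      ∃ ζ : ℝ → ℝ, C2On s t ζ ∧ SatisfiesEL L s t ζ ∧ ∀ θ ∈ Icc s t, ζ θ = ξ θ)
    (huniq : ∀ ζ1 ζ2 : ℝ → ℝ, C2On s t ζ1 → C2On s t ζ2 →
      SatisfiesEL L s t ζ1 → SatisfiesEL L s t ζ2 →
      ∀ θ0 ∈ Icc s t, ζ1 θ0 = ζ2 θ0 → deriv ζ1 θ0 = deriv ζ2 θ0 →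
      ∀ θ ∈ Icc s t, ζ1 θ = ζ2 θ) :
    (∀ θ ∈ Ico s t, ξ1 θ < ξ2 θ) ∧
    deriv ξ2 t < deriv ξ1 t ∧
    deriv (fun w => L x t w) (deriv ξ1 t) < deriv (fun w => L x t w) (deriv ξ2 t) := by
  have hs : s ∈ Icc s t := ⟨le_rfl, hst.le⟩
  have ht : t ∈ Icc s t := ⟨hst.le, le_rfl⟩
  have no_tangency : ∀ θ₀ ∈ Icc s t, ξ1 θ₀ = ξ2 θ₀ → deriv ξ1 θ₀ ≠ deriv ξ2 θ₀ :=
    fun θ₀ hθ₀ hval hder => hy.ne <| by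
      simpa [hmax1.1.1, hmax2.1.1] using
        huniq ξ1 ξ2 hξ1C2 hξ2C2 hEL1 hEL2 θ₀ hθ₀ hval hder s hs
  have no_crossing : ∀ θ₀ ∈ Ioo s t, ξ1 θ₀ ≠ ξ2 θ₀ := by
    intro θ₀ hθ₀ hval
    have hθ₀' : θ₀ ∈ Icc s t := Ioo_subset_Icc_self hθ₀
    have hbroken := hmax2.concat hmax1 (hξ2C2.integrableOn_lagrangian hL.continuous)
      (hξ1C2.integrableOn_lagrangian hL.continuous) (Ioo_subset_Ico_self hθ₀) hval.symm
    obtain ⟨ζ, hζ, -, hζeq⟩ := hreg y2 x _ _ hbroken.1 hbroken.2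
    exact no_tangency θ₀ hθ₀' hval <| Eq.symm <| (hζ.1 θ₀ hθ₀').eq_of_eqOn_concatPath
      (hξ2C2.1 θ₀ hθ₀') (hξ1C2.1 θ₀ hθ₀') hθ₀ hval.symm hζeq
  have horder : ∀ θ ∈ Ico s t, ξ1 θ < ξ2 θ :=
    lt_on_Ico_of_ne_on_Ioo hξ1C2.continuousOn hξ2C2.continuousOn
      (by rw [hmax1.1.1, hmax2.1.1]; exact hy) no_crossing
  have hmeet : ξ1 t = ξ2 t := by rw [hmax1.1.2.1, hmax2.1.2.1]
  have hvel : deriv ξ2 t < deriv ξ1 t :=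
    ((hξ1C2.1 t ht).le_of_lt_on_Ioo_of_eq (hξ2C2.1 t ht) hst
      (fun θ hθ => horder θ (Ioo_subset_Ico_self hθ)) hmeet).lt_of_ne
      (no_tangency t ht hmeet).symm
  have hLv : Differentiable ℝ (fun w => L x t w) :=
    (hL.comp (contDiff_const.prodMk (contDiff_const.prodMk contDiff_id))).differentiable
      (by norm_num)
  exact ⟨horder, hvel,
    (hconc x t).strictAntiOn_deriv (fun w _ => hLv w) (mem_univ _) (mem_univ _) hvel⟩

/-- Proposition 5.2(ii): maximizing paths with ordered starting points
`y₁ < y₂` and the same endpoint `(x,t)` stay strictly ordered on `[s,t)`,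
their terminal velocities satisfy `ξ̇¹(t) > ξ̇²(t)`, and hence the
fundamental-solution gradient `M(x,t;y,s) = L_v(x,t,ξ̇(t))` is strictly
increasing in `y`. -/
theorem stmt11
    (L : ℝ → ℝ → ℝ → ℝ) (s t T c0 c1 c2 x y1 y2 : ℝ)
    (hst : s < t) (htT : t ≤ T)
    (hc0 : 0 < c0) (hc1 : 0 < c1) (hc2 : 0 < c2)
    (hL : ContDiff ℝ 2 (fun p : ℝ × ℝ × ℝ => L p.1 p.2.1 p.2.2))
    (hconc : ∀ a θ, StrictConcaveOn ℝ univ (fun w => L a θ w))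
    (hgrowth : ∀ a θ w, -c0 + c2 * w ^ 2 ≤ -(L a θ w) ∧ -(L a θ w) ≤ c0 + c1 * w ^ 2)
    (hy : y1 < y2)
    (ξ1 ξ2 : ℝ → ℝ)
    (hξ1C2 : C2On s t ξ1) (hξ2C2 : C2On s t ξ2)
    (hmax1 : IsMaximizer L s t y1 x ξ1 (deriv ξ1))
    (hmax2 : IsMaximizer L s t y2 x ξ2 (deriv ξ2))
    (hEL1 : SatisfiesEL L s t ξ1) (hEL2 : SatisfiesEL L s t ξ2)
    (hreg : ∀ y' x' : ℝ, ∀ ξ ξ' : ℝ → ℝ, AdmissiblePath s t y' x' ξ ξ' →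
      (∀ η η', AdmissiblePath s t y' x' η η' →
        pathAction L s t η η' ≤ pathAction L s t ξ ξ') →
      ∃ ζ : ℝ → ℝ, C2On s t ζ ∧ SatisfiesEL L s t ζ ∧ ∀ θ ∈ Icc s t, ζ θ = ξ θ)
    (huniq : ∀ ζ1 ζ2 : ℝ → ℝ, C2On s t ζ1 → C2On s t ζ2 →
      SatisfiesEL L s t ζ1 → SatisfiesEL L s t ζ2 →
      ∀ θ0 ∈ Icc s t, ζ1 θ0 = ζ2 θ0 → deriv ζ1 θ0 = deriv ζ2 θ0 →
      ∀ θ ∈ Icc s t, ζ1 θ = ζ2 θ) :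
    (∀ θ ∈ Ico s t, ξ1 θ < ξ2 θ) ∧
    deriv ξ2 t < deriv ξ1 t ∧
    deriv (fun w => L x t w) (deriv ξ1 t) < deriv (fun w => L x t w) (deriv ξ2 t) :=
  stmt11_general L s t x y1 y2 hst hL hconc hy ξ1 ξ2 hξ1C2 hξ2C2 hmax1 hmax2 hEL1 hEL2 hreg huniq
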